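/- Let R be a commutative ring with identity, let n ≥ 1, let y ∈ R, and let k be a natural number. Then P₁(y)^k = P₁(k·y), where k·y denotes the k-fold sum y + ⋯ + y in R. -/

import Mathlib

open Matrix Finset

/-- Generalized Pascal matrix of the first kind: with 1-based indexing the (i,j) entry is
`y^(j-i) * binom(j-1, i-1)` for `j ≥ i` and `0` otherwise. Here indices are 0-based. -/
def pascal1 {R : Type*} [CommRing R] (n : ℕ) (y : R) : Matrix (Fin n) (Fin n) R :=
  Matrix.of fun i j => if i ≤ j then y ^ (j.val - i.val) * (Nat.choose j.val i.val : R) else 0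

/-- Zhang–Liu matrix: with 1-based indexing the (i,j) entry is
`y^(j-i) * x^(i+j-2) * binom(j-1, i-1)` for `j ≥ i` and `0` otherwise. Indices 0-based here. -/
def zhangLiu {R : Type*} [CommRing R] (n : ℕ) (y x : R) : Matrix (Fin n) (Fin n) R :=
  Matrix.of fun i j =>
    if i ≤ j then y ^ (j.val - i.val) * x ^ (i.val + j.val) * (Nat.choose j.val i.val : R) else 0

/-- `D(α)` : the diagonal matrix with (i,i) entry `α^(i-1)` (1-based), i.e. `α^i` 0-based. -/
def diagD {R : Type*} [CommRing R] (n : ℕ) (α : R) : Matrix (Fin n) (Fin n) R :=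
  Matrix.diagonal fun i : Fin n => α ^ i.val


/-!
Column `j` of `pascal1 n y` lists the coefficients of `(X + y)^j`, so `pascal1 n y` is the matrix,
in the monomial basis, of the Taylor shift `p(X) ↦ p(X + y)` on polynomials of degree `< n`.
Shifts compose additively, hence `pascal1 n y * pascal1 n z = pascal1 n (y + z)`, and the power
formula follows by induction on `k`.
-/

open Polynomial

theorem pascal1_apply_eq_coeff {R : Type*} [CommRing R] (n : ℕ) (y : R) (i j : Fin n) :
    pascal1 n y i j = ((X + C y) ^ (j : ℕ)).coeff i := by
  rw [coeff_X_add_C_pow, pascal1, of_apply, ite_eq_left_iff, not_le]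
  intro hji
  rw [Nat.choose_eq_zero_of_lt hji, Nat.cast_zero, mul_zero]

theorem natDegree_X_add_C_pow_le {R : Type*} [Semiring R] (y : R) (j : ℕ) :
    ((X + C y) ^ j).natDegree ≤ j := by
  simpa only [mul_one] using natDegree_pow_le_of_le j (natDegree_add_C.trans_le natDegree_X_le)

theorem X_add_C_pow_comp_X_add_C {R : Type*} [CommSemiring R] (y z : R) (j : ℕ) :
    ((X + C z) ^ j).comp (X + C y) = (X + C (y + z)) ^ j := by
  rw [pow_comp, add_comp, X_comp, C_comp, C_add, add_assoc]

theorem pascal1_mul {R : Type*} [CommRing R] (n : ℕ) (y z : R) :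
    pascal1 n y * pascal1 n z = pascal1 n (y + z) := by
  ext i j
  have hdeg : ((X + C z) ^ (j : ℕ)).natDegree < n :=
    (natDegree_X_add_C_pow_le z j).trans_lt j.isLt
  rw [pascal1_apply_eq_coeff, ← X_add_C_pow_comp_X_add_C, Polynomial.comp,
    eval₂_eq_sum_range' C hdeg, finsetSum_coeff, mul_apply, ← Fin.sum_univ_eq_sum_range]
  refine Finset.sum_congr rfl fun l _ => ?_
  rw [coeff_C_mul, pascal1_apply_eq_coeff, pascal1_apply_eq_coeff, mul_comm]

theorem pascal1_zero {R : Type*} [CommRing R] (n : ℕ) : pascal1 n (0 : R) = 1 := by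
  ext i j
  rw [pascal1_apply_eq_coeff, C_0, add_zero, coeff_X_pow, one_apply]
  simp only [Fin.val_inj]

theorem pascal1_pow_general {R : Type*} [CommRing R] (n : ℕ) (y : R) (k : ℕ) :
    pascal1 n y ^ k = pascal1 n (k • y) := by
  induction k with
  | zero => rw [pow_zero, zero_nsmul, pascal1_zero]
  | succ k ih => rw [pow_succ, ih, pascal1_mul, succ_nsmul]

theorem pascal1_pow {R : Type*} [CommRing R] (n : ℕ) (hn : 1 ≤ n) (y : R) (k : ℕ) :
    pascal1 n y ^ k = pascal1 n (k • y) :=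
  pascal1_pow_general n y k
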